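/- Bellman recursion: with G(1,j) := 0 for all j > 1 and G(i,j) := min over segmentations in Segment(i,j) of V, one has for all integers 1 < s < t: G(s,t) = min_{1 ≤ r < s} ( G(r,s) + c(r,s,t) + β ). -/

import Mathlib

def SegSet (T : ℕ) : Set (List ℕ) :=
  {l | l.Chain' (· < ·) ∧ l.head? = some 1 ∧ l.getLast? = some T}

def SegEnd (i j : ℕ) : Set (List ℕ) :=
  {l | l ∈ SegSet j ∧ ∃ l₀ : List ℕ, l = l₀ ++ [i, j]}

noncomputable def tripleCosts (c : ℕ → ℕ → ℕ → ℝ) : List ℕ → ℝ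
  | a :: b :: d :: rest => c a b d + tripleCosts c (b :: d :: rest)
  | _ => 0

noncomputable def V (c : ℕ → ℕ → ℕ → ℝ) (β : ℝ) (l : List ℕ) : ℝ :=
  tripleCosts c l + β * ((l.length - 2 : ℕ) : ℝ)

/-!
Removing the last point `t` from a segmentation `l ++ [r, s, t]` in `Segment(s, t)` leaves a
segmentation `l ++ [r, s]` of `{1, …, s}` and lowers `V` by exactly `c r s t + β`; conversely
every such segmentation extends by `t`. Minimising over `l` for fixed `r` gives `G r s`: for
`r > 1` by definition, and for `r = 1` because the only candidate is `[1, s]`, whose value `0`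
is the convention `G 1 s = 0`.
-/

theorem tripleCosts_append_triple (c : ℕ → ℕ → ℕ → ℝ) (l : List ℕ) (a b d : ℕ) :
    tripleCosts c (l ++ [a, b, d]) = tripleCosts c (l ++ [a, b]) + c a b d := by
  induction l with
  | nil => simp [tripleCosts]
  | cons x l ih =>
    rcases l with _ | ⟨y, _ | ⟨z, l⟩⟩
    · simp [tripleCosts]
    · simp [tripleCosts]; ring
    · simp only [List.cons_append] at ih ⊢
      rw [tripleCosts, ih, tripleCosts]; ring

theorem V_append_triple (c : ℕ → ℕ → ℕ → ℝ) (β : ℝ) (l : List ℕ) (a b d : ℕ) :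
    V c β (l ++ [a, b, d]) = V c β (l ++ [a, b]) + c a b d + β := by
  simp only [V, tripleCosts_append_triple, List.length_append, List.length_cons,
    List.length_nil]
  rw [show l.length + (0 + 1 + 1 + 1) - 2 = l.length + 1 by omega,
    show l.length + (0 + 1 + 1) - 2 = l.length by omega]
  push_cast
  ring

namespace SegSet

theorem exists_eq_one_cons {l : List ℕ} {T : ℕ} (hl : l ∈ SegSet T) :
    ∃ l', l = 1 :: l' ∧ ∀ y ∈ l', 1 < y := by
  obtain ⟨hchain, hhead, -⟩ := hl
  obtain ⟨l', rfl⟩ : ∃ l', l = 1 :: l' := by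
    rcases l with _ | ⟨x, l'⟩
    · simp at hhead
    · simp only [List.head?_cons, Option.some.injEq] at hhead
      exact ⟨l', by rw [hhead]⟩
  exact ⟨l', rfl, (List.pairwise_cons.mp (List.isChain_iff_pairwise.mp hchain)).1⟩

theorem one_le_of_mem {l : List ℕ} {T y : ℕ} (hl : l ∈ SegSet T) (hy : y ∈ l) : 1 ≤ y := by
  obtain ⟨l', rfl, hl'⟩ := exists_eq_one_cons hl
  rcases List.mem_cons.mp hy with rfl | hy
  · rfl
  · exact (hl' y hy).le

theorem lt_of_append_pair_mem {l : List ℕ} {r s T : ℕ} (h : l ++ [r, s] ∈ SegSet T) : r < s :=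
  (List.isChain_append_cons_cons.mp h.1).2.1

theorem append_singleton_mem {l : List ℕ} {s t : ℕ} (hl : l ∈ SegSet s) (hst : s < t) :
    l ++ [t] ∈ SegSet t := by
  obtain ⟨hchain, hhead, hlast⟩ := hl
  refine ⟨hchain.append (List.isChain_singleton t) ?_, ?_, by simp⟩
  · simp only [hlast, Option.mem_def, Option.some.injEq, List.head?_cons]
    rintro _ rfl _ rfl
    exact hst
  · rw [List.head?_append, hhead]; rfl

theorem mem_of_append_triple_mem {l : List ℕ} {r s t : ℕ} (h : l ++ [r, s, t] ∈ SegSet t) :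
    l ++ [r, s] ∈ SegSet s := by
  obtain ⟨hchain, hhead, -⟩ := h
  refine ⟨?_, ?_, by simp⟩
  · rw [show l ++ [r, s, t] = l ++ [r, s] ++ [t] by simp] at hchain
    exact hchain.left_of_append
  · rw [List.head?_append] at hhead ⊢
    simpa using hhead

end SegSet

theorem append_mem_segEnd {l : List ℕ} {r s t : ℕ} (hl : l ++ [r, s] ∈ SegSet s) (hst : s < t) :
    l ++ [r, s, t] ∈ SegEnd s t :=
  ⟨by simpa using SegSet.append_singleton_mem hl hst, l ++ [r], by simp⟩

theorem exists_eq_append_of_mem_segEnd {l : List ℕ} {s t : ℕ} (hs : 1 < s) (hl : l ∈ SegEnd s t) :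
    ∃ l₁ r, l = l₁ ++ [r, s, t] ∧ l₁ ++ [r, s] ∈ SegSet s := by
  obtain ⟨hseg, l₀, rfl⟩ := hl
  rcases l₀.eq_nil_or_concat with rfl | ⟨l₁, r, rfl⟩
  · have : s = 1 := by simpa using hseg.2.1
    omega
  · exact ⟨l₁, r, by simp, SegSet.mem_of_append_triple_mem (by simpa using hseg)⟩

section Bellman

variable {c : ℕ → ℕ → ℕ → ℝ} {β : ℝ} {G : ℕ → ℕ → ℝ}
  (hG1 : ∀ j, 1 < j → G 1 j = 0)
  (hG : ∀ i j, 1 < i → i < j → IsLeast (V c β '' SegEnd i j) (G i j))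
include hG1 hG

theorem le_V_of_append_pair_mem {l : List ℕ} {r s : ℕ} (hl : l ++ [r, s] ∈ SegSet s) :
    G r s ≤ V c β (l ++ [r, s]) := by
  have hrs := SegSet.lt_of_append_pair_mem hl
  rcases l with _ | ⟨x, l⟩
  · obtain rfl : r = 1 := by simpa using hl.2.1
    simp [hG1 s hrs, V, tripleCosts]
  · obtain ⟨l', hl', hgt⟩ := SegSet.exists_eq_one_cons hl
    simp only [List.cons_append, List.cons.injEq] at hl'
    have hr : 1 < r := hgt r (by simp [← hl'.2])
    exact (hG r s hr hrs).2 ⟨_, ⟨hl, x :: l, rfl⟩, rfl⟩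

theorem exists_append_pair_mem_V_eq {r s : ℕ} (hr : 1 ≤ r) (hrs : r < s) :
    ∃ l, l ++ [r, s] ∈ SegSet s ∧ V c β (l ++ [r, s]) = G r s := by
  rcases hr.eq_or_lt with rfl | hr
  · refine ⟨[], ⟨List.isChain_pair.mpr hrs, rfl, rfl⟩, ?_⟩
    simp [hG1 s hrs, V, tripleCosts]
  · obtain ⟨_, ⟨hl, l, rfl⟩, hV⟩ := (hG r s hr hrs).1
    exact ⟨l, hl, hV⟩

end Bellman

/-- Bellman recursion: with `G 1 j = 0` and `G i j` the minimum of `V` over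
`Segment(i,j)` for `1 < i < j`, one has
`G s t = min_{1 ≤ r < s} (G r s + c r s t + β)`. -/
theorem stmt3 (c : ℕ → ℕ → ℕ → ℝ) (β : ℝ) (G : ℕ → ℕ → ℝ)
    (hG1 : ∀ j, 1 < j → G 1 j = 0)
    (hG : ∀ i j, 1 < i → i < j → IsLeast (V c β '' SegEnd i j) (G i j))
    (s t : ℕ) (hs : 1 < s) (hst : s < t) :
    G s t = (Finset.Ico 1 s).inf' (Finset.nonempty_Ico.mpr hs)
      (fun r => G r s + c r s t + β) := by
  refine le_antisymm (Finset.le_inf' _ _ fun r hr => ?_) ?_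
  · obtain ⟨hr, hrs⟩ := Finset.mem_Ico.mp hr
    obtain ⟨l, hl, hV⟩ := exists_append_pair_mem_V_eq hG1 hG hr hrs
    calc G s t ≤ V c β (l ++ [r, s, t]) := (hG s t hs hst).2 ⟨_, append_mem_segEnd hl hst, rfl⟩
      _ = G r s + c r s t + β := by rw [V_append_triple, hV]
  · obtain ⟨_, hl, hV⟩ := (hG s t hs hst).1
    obtain ⟨l, r, rfl, hseg⟩ := exists_eq_append_of_mem_segEnd hs hl
    have hr : r ∈ Finset.Ico 1 s :=
      Finset.mem_Ico.mpr ⟨SegSet.one_le_of_mem hseg (by simp), SegSet.lt_of_append_pair_mem hseg⟩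
    calc _ ≤ G r s + c r s t + β := Finset.inf'_le _ hr
      _ ≤ V c β (l ++ [r, s]) + c r s t + β := by
          gcongr; exact le_V_of_append_pair_mem hG1 hG hseg
      _ = G s t := by rw [← V_append_triple, hV]
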